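/- arXiv:2511.13068 — 3 statements merged into one kernel-verified Lean document; each statement's English description precedes it below -/
import Mathlib

section
/- Let (s_k) be a non-decreasing sequence of nonnegative reals. If there exist δ > 0 and infinitely many indices k with s_k > (1+δ) log k, then ∑_{k=1}^∞ k^{-2} exp(s_k) = ∞. -/
theorem stmt_1 (s : ℕ → ℝ) (hmono : Monotone s) (hnn : ∀ k, 0 ≤ s k)
    (δ : ℝ) (hδ : 0 < δ)
    (hinf : ∀ N : ℕ, ∃ k ≥ N, s k > (1 + δ) * Real.log k) :
    ¬ Summable (fun k : ℕ => (k : ℝ)⁻¹ ^ 2 * Real.exp (s k)) := by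
  intro hsum
  set f := fun k : ℕ => (k : ℝ)⁻¹ ^ 2 * Real.exp (s k) with hf
  have hfnn : ∀ k, 0 ≤ f k := fun k => mul_nonneg (by positivity) (Real.exp_pos _).le
  set T := ∑' k, f k with hT
  have hTnn : 0 ≤ T := tsum_nonneg hfnn
  obtain ⟨N0, hN0⟩ : ∃ N0 : ℕ, 4 * T + 1 < (N0 : ℝ) ^ δ := by
    have h1 : Filter.Tendsto (fun x : ℝ => x ^ δ) Filter.atTop Filter.atTop :=
      tendsto_rpow_atTop hδ
    have h2 : Filter.Tendsto (fun n : ℕ => (n : ℝ) ^ δ) Filter.atTop Filter.atTop :=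
      h1.comp tendsto_natCast_atTop_atTop
    obtain ⟨N0, hN0⟩ := (h2.eventually_gt_atTop (4 * T + 1)).exists
    exact ⟨N0, hN0⟩
  obtain ⟨k, hkN, hks⟩ := hinf (max N0 1)
  have hk1 : 1 ≤ k := le_trans (le_max_right _ _) hkN
  have hkpos : (0 : ℝ) < (k : ℝ) := by exact_mod_cast hk1
  -- exp (s j) ≥ k ^ (1+δ) for j ≥ k
  have hexp : ∀ j, k ≤ j → (k : ℝ) ^ (1 + δ) ≤ Real.exp (s j) := by
    intro j hj
    have h0 : (k : ℝ) ^ (1 + δ) = Real.exp ((1 + δ) * Real.log k) := by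
      rw [Real.rpow_def_of_pos hkpos, mul_comm]
    rw [h0]
    exact Real.exp_le_exp.2 (le_trans hks.le (hmono hj))
  -- lower bound for terms in Ico k (2k)
  have hlb : ∀ j ∈ Finset.Ico k (2 * k),
      (2 * (k : ℝ))⁻¹ ^ 2 * (k : ℝ) ^ (1 + δ) ≤ f j := by
    intro j hj
    rw [Finset.mem_Ico] at hj
    have hjpos : (0 : ℝ) < (j : ℝ) := by
      have : 0 < j := lt_of_lt_of_le hk1 hj.1
      exact_mod_cast this
    have hj2k : (j : ℝ) ≤ 2 * (k : ℝ) := by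
      have : (j : ℕ) ≤ 2 * k := hj.2.le
      exact_mod_cast this
    have hinv : (2 * (k : ℝ))⁻¹ ≤ (j : ℝ)⁻¹ := by
      apply inv_anti₀ hjpos hj2k
    have hinv2 : (2 * (k : ℝ))⁻¹ ^ 2 ≤ (j : ℝ)⁻¹ ^ 2 := by
      apply pow_le_pow_left₀ (by positivity) hinv
    exact mul_le_mul hinv2 (hexp j hj.1) (by positivity) (by positivity)
  have hcard : (Finset.Ico k (2 * k)).card = k := by
    rw [Nat.card_Ico]; omega
  have hsum1 : (k : ℝ) * ((2 * (k : ℝ))⁻¹ ^ 2 * (k : ℝ) ^ (1 + δ)) ≤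
      ∑ j ∈ Finset.Ico k (2 * k), f j := by
    have := Finset.card_nsmul_le_sum (Finset.Ico k (2 * k)) f
      ((2 * (k : ℝ))⁻¹ ^ 2 * (k : ℝ) ^ (1 + δ)) hlb
    rwa [hcard, nsmul_eq_mul] at this
  have hle : ∑ j ∈ Finset.Ico k (2 * k), f j ≤ T :=
    Summable.sum_le_tsum _ (fun j _ => hfnn j) hsum
  have harith : (k : ℝ) * ((2 * (k : ℝ))⁻¹ ^ 2 * (k : ℝ) ^ (1 + δ)) = (k : ℝ) ^ δ / 4 := by
    have h1 : (k : ℝ) ^ (1 + δ) = (k : ℝ) * (k : ℝ) ^ δ := by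
      rw [Real.rpow_add hkpos, Real.rpow_one]
    rw [h1]
    field_simp
    ring
  have hfin : (k : ℝ) ^ δ / 4 ≤ T := by rw [← harith]; exact le_trans hsum1 hle
  have hkN0 : (N0 : ℝ) ^ δ ≤ (k : ℝ) ^ δ := by
    apply Real.rpow_le_rpow (Nat.cast_nonneg _) _ hδ.le
    exact_mod_cast le_trans (le_max_left _ _) hkN
  linarith
end

section
/- Let f : ℝ/ℤ → ℂ be integrable, let h > 0, and let n be a positive integer with |e^{2πinh} − 1| ≥ 1. Then |∫_0^1 f(t) e^{−2πint} dt| ≤ ∫_0^1 |f(t+h) − f(t)| dt. -/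
/-!
Translating `f` by `h` multiplies its `n`-th Fourier coefficient `c` by `e^{2πinh}`, so the
`n`-th coefficient of `f (· + h) - f` is `(e^{2πinh} - 1) c`. Its modulus is at least `‖c‖` by
the hypothesis on `h`, and at most the `L¹` norm of `f (· + h) - f` since the character has
modulus one.
-/

open MeasureTheory intervalIntegral Complex Real

theorem Function.Periodic.intervalIntegral_comp_add_right {E : Type*} [NormedAddCommGroup E]
    [NormedSpace ℝ E] {f : ℝ → E} {T : ℝ} (hf : Function.Periodic f T) (h : ℝ) :
    ∫ t in (0:ℝ)..T, f (t + h) = ∫ t in (0:ℝ)..T, f t := by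
  rw [intervalIntegral.integral_comp_add_right, zero_add, add_comm T h,
    hf.intervalIntegral_add_eq h 0, zero_add]

theorem periodic_exp_neg_two_pi_I_mul (n : ℤ) :
    Function.Periodic (fun t : ℝ => exp (-(2 * π * I * n * t))) 1 := by
  intro t
  have : -(2 * π * I * n * ((t + 1 : ℝ) : ℂ)) = -(2 * π * I * n * t) + (-n : ℤ) * (2 * π * I) := by
    push_cast; ring
  simp only [this, Complex.exp_add, exp_int_mul_two_pi_mul_I, mul_one]

theorem norm_exp_neg_two_pi_I_mul (n : ℤ) (t : ℝ) : ‖exp (-(2 * π * I * n * t))‖ = 1 := by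
  rw [norm_exp]
  simp

theorem integral_comp_add_right_mul_exp {f : ℝ → ℂ} (hf : Function.Periodic f 1) (n : ℤ) (h : ℝ) :
    ∫ t in (0:ℝ)..1, f (t + h) * exp (-(2 * π * I * n * t)) =
      exp (2 * π * I * n * h) * ∫ t in (0:ℝ)..1, f t * exp (-(2 * π * I * n * t)) := by
  have hmul (t : ℝ) : f (t + h) * exp (-(2 * π * I * n * t)) =
      exp (2 * π * I * n * h) * (f (t + h) * exp (-(2 * π * I * n * ((t + h : ℝ) : ℂ)))) := by
    rw [mul_left_comm, ← Complex.exp_add]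
    push_cast
    ring_nf
  simp_rw [hmul, intervalIntegral.integral_const_mul]
  exact congrArg _ ((hf.mul (periodic_exp_neg_two_pi_I_mul n)).intervalIntegral_comp_add_right h)

theorem stmt_2_general (f : ℝ → ℂ) (hper : Function.Periodic f 1)
    (hint : IntervalIntegrable f MeasureTheory.volume 0 1)
    (h : ℝ) (n : ℕ)
    (hfar : 1 ≤ ‖Complex.exp (2 * Real.pi * Complex.I * n * h) - 1‖) :
    ‖∫ t in (0:ℝ)..1, f t * Complex.exp (-(2 * Real.pi * Complex.I * n * t))‖ ≤
      ∫ t in (0:ℝ)..1, ‖f (t + h) - f t‖ := by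
  have htranslate := integral_comp_add_right_mul_exp hper n h
  simp only [Int.cast_natCast] at htranslate
  set e : ℝ → ℂ := fun t => exp (-(2 * π * I * n * t))
  set c := ∫ t in (0:ℝ)..1, f t * e t
  have hnorm_e (t : ℝ) : ‖e t‖ = 1 := by simpa using norm_exp_neg_two_pi_I_mul n t
  have he : ContinuousOn e (Set.uIcc 0 1) := by fun_prop
  have hshift : IntervalIntegrable (fun t => f (t + h)) volume 0 1 := by
    simpa using (hper.intervalIntegrable₀ one_ne_zero hint h (1 + h)).comp_add_right h
  have hdiff : ∫ t in (0:ℝ)..1, (f (t + h) - f t) * e t = (exp (2 * π * I * n * h) - 1) * c := by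
    simp_rw [sub_mul]
    rw [integral_sub (hshift.mul_continuousOn he) (hint.mul_continuousOn he), htranslate]
    ring
  calc ‖c‖ ≤ ‖exp (2 * π * I * n * h) - 1‖ * ‖c‖ := le_mul_of_one_le_left (norm_nonneg _) hfar
    _ = ‖∫ t in (0:ℝ)..1, (f (t + h) - f t) * e t‖ := by rw [hdiff, norm_mul]
    _ ≤ ∫ t in (0:ℝ)..1, ‖(f (t + h) - f t) * e t‖ := norm_integral_le_integral_norm zero_le_one
    _ = ∫ t in (0:ℝ)..1, ‖f (t + h) - f t‖ := by simp only [norm_mul, hnorm_e, mul_one]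

theorem stmt_2 (f : ℝ → ℂ) (hper : Function.Periodic f 1)
    (hint : IntervalIntegrable f MeasureTheory.volume 0 1)
    (h : ℝ) (hh : 0 < h) (n : ℕ) (hn : 0 < n)
    (hfar : 1 ≤ ‖Complex.exp (2 * Real.pi * Complex.I * n * h) - 1‖) :
    ‖∫ t in (0:ℝ)..1, f t * Complex.exp (-(2 * Real.pi * Complex.I * n * t))‖ ≤
      ∫ t in (0:ℝ)..1, ‖f (t + h) - f t‖ :=
  stmt_2_general f hper hint h n hfar
end

section
/- Let ω_1,...,ω_k be independent uniform random variables on ℝ/ℤ, 0 < ℓ_j < 1 with ℓ_j ≤ ℓ_1 for all j, I_j = (ω_j, ω_j + ℓ_j), X_j(t) = (1 − 1_{I_j}(t))/(1 − ℓ_j), M_k(t) = ∏_{j=1}^k X_j(t). Then for every 1 < p ≤ 2, t ∈ ℝ/ℤ, and h > 0: E[|M_k(t+h) − M_k(t)|^p] ≤ (2hk/(1 − ℓ_1)) · ∏_{j=1}^k (1 − ℓ_j)^{1−p}. -/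
/-!
With `a_j = 1 - 1_{I_j}(t + h)` and `b_j = 1 - 1_{I_j}(t)`, both in `{0, 1}`, the increment is
`M_k(t + h) - M_k(t) = C (∏ a - ∏ b)` with `C = ∏ (1 - ℓ_j)⁻¹`. As `|∏ a - ∏ b| ≤ 1` and `p ≥ 1`,
its `p`-th power is at most `|∏ a - ∏ b| ≤ ∑_j ((1 - b_j) ∏ a + (1 - a_j) ∏ b)`. By independence
the `j`-th summand has mean `P(I_j separates t and t + h) ∏_{i ≠ j} (1 - ℓ_i)`, and `I_j` can only
separate the two points if one of its endpoints lies in an interval of length `h`. Finally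
`∏_{i ≠ j} (1 - ℓ_i) ≤ ∏_i (1 - ℓ_i) / (1 - ℓ_1)`.
-/

open MeasureTheory Set Function

theorem Function.Periodic.setIntegral_Ioo_comp_sub {f : ℝ → ℝ} {T : ℝ} (hf : Periodic f T)
    (hT : 0 ≤ T) (c : ℝ) : ∫ x in Ioo 0 T, f (c - x) = ∫ x in Ioo 0 T, f x := by
  have hshift := hf.intervalIntegral_add_eq (c - T) 0
  rw [sub_add_cancel, zero_add] at hshift
  rw [← integral_Ioc_eq_integral_Ioo, ← integral_Ioc_eq_integral_Ioo,
    ← intervalIntegral.integral_of_le hT, ← intervalIntegral.integral_of_le hT,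
    intervalIntegral.integral_comp_sub_left, sub_zero, hshift]

theorem setIntegral_le_of_le_indicator_Ico {f : ℝ → ℝ} {s : Set ℝ} (hs : MeasurableSet s)
    {a h : ℝ} (hh : 0 ≤ h) (hf0 : ∀ u, 0 ≤ f u)
    (hf : ∀ u ∈ s, f u ≤ (Ico a (a + h)).indicator 1 u) : ∫ u in s, f u ≤ h := by
  have hind : Integrable ((Ico a (a + h)).indicator (1 : ℝ → ℝ)) :=
    (integrable_indicator_iff measurableSet_Ico).2 (integrableOn_const measure_Ico_lt_top.ne)
  calc ∫ u in s, f u ≤ ∫ u in s, (Ico a (a + h)).indicator 1 u :=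
        integral_mono_of_nonneg (.of_forall hf0) hind.integrableOn
          ((ae_restrict_iff' hs).2 (.of_forall hf))
    _ ≤ ∫ u, (Ico a (a + h)).indicator 1 u :=
        setIntegral_le_integral hind (.of_forall (indicator_nonneg (fun _ _ => zero_le_one)))
    _ = h := by
        rw [integral_indicator_one measurableSet_Ico, Real.volume_real_Ico, add_sub_cancel_left,
          max_eq_left hh]

theorem Function.Periodic.setIntegral_Ioo_comp_sub_le {f : ℝ → ℝ} (hf : Periodic f 1)
    (hf0 : ∀ u, 0 ≤ f u) {a h : ℝ} (hh : 0 ≤ h)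
    (hfa : ∀ u ∈ Ioo 0 1, f u ≤ (Ico a (a + h)).indicator 1 u) (c : ℝ) :
    ∫ ω in Ioo 0 1, f (c - ω) ≤ h :=
  (hf.setIntegral_Ioo_comp_sub zero_le_one c).trans_le
    (setIntegral_le_of_le_indicator_Ico measurableSet_Ioo hh hf0 hfa)

/-- `arcIndicator ℓ (t - ω)` is the indicator `1_{(ω, ω + ℓ)}(t)` of the arc `(ω, ω + ℓ)`
of `ℝ/ℤ`. -/
noncomputable def arcIndicator (ℓ x : ℝ) : ℝ := if Int.fract x ∈ Ioo 0 ℓ then 1 else 0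

namespace arcIndicator

variable {ℓ x : ℝ}

theorem nonneg : 0 ≤ arcIndicator ℓ x := by unfold arcIndicator; split_ifs <;> norm_num

theorem le_one : arcIndicator ℓ x ≤ 1 := by unfold arcIndicator; split_ifs <;> norm_num

theorem mem_Icc : arcIndicator ℓ x ∈ Icc 0 1 := ⟨nonneg, le_one⟩

theorem periodic (ℓ : ℝ) : Periodic (arcIndicator ℓ) 1 := fun x => by
  simp only [arcIndicator, Int.fract_add_one]

theorem measurable (ℓ : ℝ) : Measurable (arcIndicator ℓ) :=
  Measurable.ite (measurable_fract measurableSet_Ioo) measurable_const measurable_const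

theorem eq_one (h0 : 0 < x) (hℓ : x < ℓ) (h1 : x < 1) : arcIndicator ℓ x = 1 := by
  rw [arcIndicator, Int.fract_eq_self.2 ⟨h0.le, h1⟩, if_pos ⟨h0, hℓ⟩]

theorem eq_zero (h0 : 0 ≤ x) (hℓ : ℓ ≤ x) (h1 : x < 1) : arcIndicator ℓ x = 0 := by
  rw [arcIndicator, Int.fract_eq_self.2 ⟨h0, h1⟩, if_neg fun hx => hx.2.not_ge hℓ]

end arcIndicator

open arcIndicator

theorem setIntegral_one_sub_arcIndicator_le {ℓ : ℝ} (hℓ : ℓ ≤ 1) (t : ℝ) :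
    ∫ ω in Ioo 0 1, (1 - arcIndicator ℓ (t - ω)) ≤ 1 - ℓ := by
  refine Periodic.setIntegral_Ioo_comp_sub_le (f := fun u => 1 - arcIndicator ℓ u)
    (fun u => by simp only [periodic ℓ u]) (fun _ => sub_nonneg.2 le_one) (a := ℓ)
    (sub_nonneg.2 hℓ) (fun u ⟨hu0, hu1⟩ => ?_) t
  rcases lt_or_ge u ℓ with huℓ | huℓ
  · rw [eq_one hu0 huℓ hu1, sub_self]
    exact indicator_nonneg (fun _ _ => zero_le_one) u
  · rw [indicator_of_mem (show u ∈ Ico ℓ (ℓ + (1 - ℓ)) from ⟨huℓ, by linarith⟩)]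
    exact sub_le_self _ nonneg

theorem setIntegral_arcIndicator_mul_one_sub_shift_le {ℓ h : ℝ} (hℓ : ℓ ≤ 1) (hh : 0 ≤ h) (t : ℝ) :
    ∫ ω in Ioo 0 1, arcIndicator ℓ (t - ω) * (1 - arcIndicator ℓ (t + h - ω)) ≤ h := by
  simp_rw [← sub_add_eq_add_sub]
  refine Periodic.setIntegral_Ioo_comp_sub_le
    (f := fun u => arcIndicator ℓ u * (1 - arcIndicator ℓ (u + h)))
    (fun u => by simp only [add_right_comm u 1 h, periodic ℓ u, periodic ℓ (u + h)])
    (fun _ => mul_nonneg nonneg (sub_nonneg.2 le_one)) (a := ℓ - h) hh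
    (fun u ⟨hu0, hu1⟩ => ?_) t
  by_cases hu : u ∈ Ico (ℓ - h) (ℓ - h + h)
  · rw [indicator_of_mem hu]
    exact mul_le_one₀ le_one (sub_nonneg.2 le_one) (sub_le_self _ nonneg)
  · rw [indicator_of_notMem hu]
    rcases lt_or_ge u ℓ with huℓ | huℓ
    · have huh : u + h < ℓ := by
        by_contra! huh
        exact hu ⟨by linarith, by linarith⟩
      rw [eq_one (x := u + h) (by linarith) huh (by linarith), sub_self, mul_zero]
    · rw [eq_zero hu0.le huℓ hu1, zero_mul]

theorem setIntegral_arcIndicator_shift_mul_one_sub_le {ℓ h : ℝ} (hh : 0 ≤ h) (t : ℝ) :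
    ∫ ω in Ioo 0 1, arcIndicator ℓ (t + h - ω) * (1 - arcIndicator ℓ (t - ω)) ≤ h := by
  simp_rw [← sub_add_eq_add_sub]
  refine Periodic.setIntegral_Ioo_comp_sub_le
    (f := fun u => arcIndicator ℓ (u + h) * (1 - arcIndicator ℓ u))
    (fun u => by simp only [add_right_comm u 1 h, periodic ℓ u, periodic ℓ (u + h)])
    (fun _ => mul_nonneg nonneg (sub_nonneg.2 le_one)) (a := 1 - h) hh
    (fun u ⟨hu0, hu1⟩ => ?_) t
  by_cases hu : u ∈ Ico (1 - h) (1 - h + h)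
  · rw [indicator_of_mem hu]
    exact mul_le_one₀ le_one (sub_nonneg.2 le_one) (sub_le_self _ nonneg)
  · rw [indicator_of_notMem hu]
    have hu' : u + h < 1 := by
      by_contra! hu'
      exact hu ⟨by linarith, by linarith⟩
    rcases lt_or_ge u ℓ with huℓ | huℓ
    · rw [eq_one hu0 huℓ hu1, sub_self, mul_zero]
    · rw [eq_zero (by linarith) (by linarith) hu', zero_mul]

theorem unitInterval.abs_sub_mem {x y : ℝ} (hx : x ∈ unitInterval) (hy : y ∈ unitInterval) :
    |x - y| ∈ unitInterval :=
  ⟨abs_nonneg _, abs_sub_le_iff.2 ⟨by linarith [hx.2, hy.1], by linarith [hx.1, hy.2]⟩⟩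

theorem abs_sub_le_mul_one_sub_add_mul_one_sub {x y : ℝ} (hx : x ∈ Icc 0 1) (hy : y ∈ Icc 0 1) :
    |x - y| ≤ x * (1 - y) + y * (1 - x) := by
  obtain ⟨hx0, hx1⟩ := hx
  obtain ⟨hy0, hy1⟩ := hy
  rw [abs_le]
  constructor <;> nlinarith [mul_nonneg hx0 (sub_nonneg.2 hy1), mul_nonneg hy0 (sub_nonneg.2 hx1)]

theorem Finset.one_sub_prod_le_sum_one_sub {ι : Type*} (s : Finset ι) {x : ι → ℝ}
    (hx : ∀ i ∈ s, x i ∈ Set.Icc 0 1) : 1 - ∏ i ∈ s, x i ≤ ∑ i ∈ s, (1 - x i) := by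
  classical
  induction s using Finset.induction_on with
  | empty => simp
  | insert a s ha ih =>
    rw [Finset.prod_insert ha, Finset.sum_insert ha]
    have hxa := hx a (Finset.mem_insert_self a s)
    have hs : ∀ i ∈ s, x i ∈ Set.Icc 0 1 := fun i hi => hx i (Finset.mem_insert_of_mem hi)
    nlinarith [ih hs, hxa.1, hxa.2, (unitInterval.prod_mem hs).2]

theorem abs_prod_sub_prod_le {ι : Type*} [Fintype ι] {x y : ι → ℝ} (hx : ∀ i, x i ∈ Icc 0 1)
    (hy : ∀ i, y i ∈ Icc 0 1) :
    |∏ i, x i - ∏ i, y i| ≤ ∑ j, ((1 - y j) * ∏ i, x i + (1 - x j) * ∏ i, y i) := by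
  have hX : ∏ i, x i ∈ Icc 0 1 := unitInterval.prod_mem fun i _ => hx i
  have hY : ∏ i, y i ∈ Icc 0 1 := unitInterval.prod_mem fun i _ => hy i
  calc |∏ i, x i - ∏ i, y i|
      ≤ (∏ i, x i) * (1 - ∏ i, y i) + (∏ i, y i) * (1 - ∏ i, x i) :=
        abs_sub_le_mul_one_sub_add_mul_one_sub hX hY
    _ ≤ (∏ i, x i) * ∑ j, (1 - y j) + (∏ i, y i) * ∑ j, (1 - x j) := by
        gcongr
        · exact hX.1
        · exact Finset.one_sub_prod_le_sum_one_sub _ fun i _ => hy i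
        · exact hY.1
        · exact Finset.one_sub_prod_le_sum_one_sub _ fun i _ => hx i
    _ = ∑ j, ((1 - y j) * ∏ i, x i + (1 - x j) * ∏ i, y i) := by
        rw [Finset.mul_sum, Finset.mul_sum, ← Finset.sum_add_distrib]
        exact Finset.sum_congr rfl fun j _ => by ring

theorem abs_prod_div_sub_prod_div_rpow_le {ι : Type*} [Fintype ι] {x y c : ι → ℝ}
    (hx : ∀ i, x i ∈ Icc 0 1) (hy : ∀ i, y i ∈ Icc 0 1) (hc : ∀ i, 0 < c i) {p : ℝ}
    (hp : 1 ≤ p) :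
    |∏ i, x i / c i - ∏ i, y i / c i| ^ p ≤ (∏ i, c i)⁻¹ ^ p * |∏ i, x i - ∏ i, y i| := by
  have hC : 0 < ∏ i, c i := Finset.prod_pos fun i _ => hc i
  have hXY : |∏ i, x i - ∏ i, y i| ∈ Icc 0 1 := unitInterval.abs_sub_mem
    (unitInterval.prod_mem fun i _ => hx i) (unitInterval.prod_mem fun i _ => hy i)
  rw [Finset.prod_div_distrib, Finset.prod_div_distrib, ← sub_div, abs_div, abs_of_pos hC,
    div_eq_inv_mul, Real.mul_rpow (inv_nonneg.2 hC.le) (abs_nonneg _)]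
  gcongr
  exact Real.rpow_le_self_of_le_one hXY.1 hXY.2 hp

theorem inv_prod_rpow_mul_sum_prod_erase_le {ι : Type*} [Fintype ι] [DecidableEq ι]
    {c : ι → ℝ} {m : ℝ} (hm : 0 < m) (hc : ∀ i, m ≤ c i) (p : ℝ) :
    (∏ i, c i)⁻¹ ^ p * ∑ j, ∏ i ∈ Finset.univ.erase j, c i ≤
      Fintype.card ι / m * ∏ i, c i ^ (1 - p) := by
  have hc0 : ∀ i, 0 < c i := fun i => hm.trans_le (hc i)
  have hC : 0 < ∏ i, c i := Finset.prod_pos fun i _ => hc0 i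
  have herase : ∀ j, ∏ i ∈ Finset.univ.erase j, c i ≤ (∏ i, c i) / m := fun j => by
    rw [← Finset.mul_prod_erase _ _ (Finset.mem_univ j), mul_div_right_comm,
      le_mul_iff_one_le_left (Finset.prod_pos fun i _ => hc0 i), one_le_div hm]
    exact hc j
  calc (∏ i, c i)⁻¹ ^ p * ∑ j, ∏ i ∈ Finset.univ.erase j, c i
      ≤ (∏ i, c i)⁻¹ ^ p * ∑ _j : ι, (∏ i, c i) / m := by
        gcongr with j
        exact herase j
    _ = Fintype.card ι / m * ∏ i, c i ^ (1 - p) := by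
        rw [Real.finsetProd_rpow _ _ (fun i _ => (hc0 i).le), Real.rpow_sub hC, Real.rpow_one,
          Real.inv_rpow hC.le, Finset.sum_const, Finset.card_univ, nsmul_eq_mul]
        field_simp

section ProductMeasure

variable {ι Ω : Type*} [Fintype ι] [MeasurableSpace Ω] {μ : ι → Measure Ω} {a b : ι → Ω → ℝ}

theorem integral_mul_prod_eq_mul_prod_erase [DecidableEq ι] [∀ i, SigmaFinite (μ i)]
    (a : ι → Ω → ℝ) (g : Ω → ℝ) (j : ι) :
    ∫ ω, g (ω j) * ∏ i, a i (ω i) ∂Measure.pi μ =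
      (∫ x, g x * a j x ∂μ j) * ∏ i ∈ Finset.univ.erase j, ∫ x, a i x ∂μ i := by
  set F := update a j (fun x => g x * a j x)
  have hF : ∀ i ∈ Finset.univ.erase j, F i = a i := fun i hi =>
    update_of_ne (Finset.ne_of_mem_erase hi) _ _
  have hFj : F j = fun x => g x * a j x := update_self _ _ _
  calc ∫ ω, g (ω j) * ∏ i, a i (ω i) ∂Measure.pi μ = ∫ ω, ∏ i, F i (ω i) ∂Measure.pi μ := by
        refine integral_congr_ae (.of_forall fun ω => ?_)
        dsimp only
        rw [← Finset.mul_prod_erase _ (fun i => a i (ω i)) (Finset.mem_univ j),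
          ← Finset.mul_prod_erase _ (fun i => F i (ω i)) (Finset.mem_univ j), hFj, mul_assoc,
          Finset.prod_congr rfl fun i hi => congrFun (hF i hi) (ω i)]
    _ = ∏ i, ∫ x, F i x ∂μ i := integral_fintype_prod_eq_prod F
    _ = (∫ x, g x * a j x ∂μ j) * ∏ i ∈ Finset.univ.erase j, ∫ x, a i x ∂μ i := by
        rw [← Finset.mul_prod_erase _ _ (Finset.mem_univ j),
          Finset.prod_congr rfl fun i hi => by rw [hF i hi], hFj]

theorem measurable_prod_comp_eval {a : ι → Ω → ℝ} (ha : ∀ i, Measurable (a i)) :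
    Measurable fun ω : ι → Ω => ∏ i, a i (ω i) :=
  Finset.measurable_prod _ fun i _ => (ha i).comp (measurable_pi_apply i)

theorem integrable_mul_prod [∀ i, IsFiniteMeasure (μ i)] (ha : ∀ i, Measurable (a i))
    (ha01 : ∀ i x, a i x ∈ Icc 0 1) {g : Ω → ℝ} (hg : Measurable g) (hg01 : ∀ x, g x ∈ Icc 0 1)
    (j : ι) : Integrable (fun ω => g (ω j) * ∏ i, a i (ω i)) (Measure.pi μ) :=
  .of_mem_Icc 0 1
    ((hg.comp (measurable_pi_apply j)).mul (measurable_prod_comp_eval ha)).aemeasurable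
    (.of_forall fun _ => unitInterval.mul_mem (hg01 _) (unitInterval.prod_mem fun i _ => ha01 i _))

theorem integral_abs_prod_sub_prod_le [DecidableEq ι] [∀ i, IsFiniteMeasure (μ i)]
    (ha : ∀ i, Measurable (a i)) (hb : ∀ i, Measurable (b i))
    (ha01 : ∀ i x, a i x ∈ Icc 0 1) (hb01 : ∀ i x, b i x ∈ Icc 0 1) :
    ∫ ω, |∏ i, a i (ω i) - ∏ i, b i (ω i)| ∂Measure.pi μ ≤
      ∑ j, ((∫ x, (1 - b j x) * a j x ∂μ j) * ∏ i ∈ Finset.univ.erase j, ∫ x, a i x ∂μ i +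
        (∫ x, (1 - a j x) * b j x ∂μ j) * ∏ i ∈ Finset.univ.erase j, ∫ x, b i x ∂μ i) := by
  have hint₁ := fun j => integrable_mul_prod (μ := μ) ha ha01 (g := fun x => 1 - b j x)
    (measurable_const.sub (hb j)) (fun x => Icc.mem_iff_one_sub_mem.1 (hb01 j x)) j
  have hint₂ := fun j => integrable_mul_prod (μ := μ) hb hb01 (g := fun x => 1 - a j x)
    (measurable_const.sub (ha j)) (fun x => Icc.mem_iff_one_sub_mem.1 (ha01 j x)) j
  have hint : ∀ j, Integrable (fun ω => (1 - b j (ω j)) * ∏ i, a i (ω i) +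
      (1 - a j (ω j)) * ∏ i, b i (ω i)) (Measure.pi μ) := fun j => (hint₁ j).add (hint₂ j)
  calc ∫ ω, |∏ i, a i (ω i) - ∏ i, b i (ω i)| ∂Measure.pi μ
      ≤ ∫ ω, ∑ j, ((1 - b j (ω j)) * ∏ i, a i (ω i) + (1 - a j (ω j)) * ∏ i, b i (ω i))
          ∂Measure.pi μ :=
        integral_mono_of_nonneg (.of_forall fun _ => abs_nonneg _)
          (integrable_finsetSum _ fun j _ => hint j)
          (.of_forall fun ω => abs_prod_sub_prod_le (fun i => ha01 i _) (fun i => hb01 i _))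
    _ = _ := by
        rw [integral_finsetSum _ fun j _ => hint j]
        refine Finset.sum_congr rfl fun j _ => ?_
        rw [integral_add (hint₁ j) (hint₂ j),
          integral_mul_prod_eq_mul_prod_erase a (fun x => 1 - b j x),
          integral_mul_prod_eq_mul_prod_erase b (fun x => 1 - a j x)]

theorem integral_abs_prod_sub_prod_le_of_le [DecidableEq ι] [∀ i, IsFiniteMeasure (μ i)]
    (ha : ∀ i, Measurable (a i)) (hb : ∀ i, Measurable (b i))
    (ha01 : ∀ i x, a i x ∈ Icc 0 1) (hb01 : ∀ i x, b i x ∈ Icc 0 1) {c : ι → ℝ} {δ : ℝ}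
    (hδ : 0 ≤ δ) (hac : ∀ i, ∫ x, a i x ∂μ i ≤ c i) (hbc : ∀ i, ∫ x, b i x ∂μ i ≤ c i)
    (hba : ∀ j, ∫ x, (1 - b j x) * a j x ∂μ j ≤ δ)
    (hab : ∀ j, ∫ x, (1 - a j x) * b j x ∂μ j ≤ δ) :
    ∫ ω, |∏ i, a i (ω i) - ∏ i, b i (ω i)| ∂Measure.pi μ ≤
      2 * δ * ∑ j, ∏ i ∈ Finset.univ.erase j, c i := by
  have hnonneg : ∀ d : ι → Ω → ℝ, (∀ i x, d i x ∈ Icc 0 1) → ∀ i, 0 ≤ ∫ x, d i x ∂μ i :=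
    fun d hd i => integral_nonneg fun x => (hd i x).1
  have hprod : ∀ d : ι → Ω → ℝ, (∀ i x, d i x ∈ Icc 0 1) → (∀ i, ∫ x, d i x ∂μ i ≤ c i) →
      ∀ j, ∏ i ∈ Finset.univ.erase j, ∫ x, d i x ∂μ i ≤ ∏ i ∈ Finset.univ.erase j, c i :=
    fun d hd hdc j => Finset.prod_le_prod (fun i _ => hnonneg d hd i) fun i _ => hdc i
  refine (integral_abs_prod_sub_prod_le ha hb ha01 hb01).trans ?_
  rw [Finset.mul_sum]
  refine Finset.sum_le_sum fun j _ => ?_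
  rw [two_mul, add_mul]
  exact add_le_add
    (mul_le_mul (hba j) (hprod a ha01 hac j) (Finset.prod_nonneg fun i _ => hnonneg a ha01 i) hδ)
    (mul_le_mul (hab j) (hprod b hb01 hbc j) (Finset.prod_nonneg fun i _ => hnonneg b hb01 i) hδ)

theorem integral_abs_prod_div_sub_prod_div_rpow_le [DecidableEq ι] [∀ i, IsFiniteMeasure (μ i)]
    (ha : ∀ i, Measurable (a i)) (hb : ∀ i, Measurable (b i))
    (ha01 : ∀ i x, a i x ∈ Icc 0 1) (hb01 : ∀ i x, b i x ∈ Icc 0 1) {c : ι → ℝ}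
    (hc : ∀ i, 0 < c i) {p : ℝ} (hp : 1 ≤ p) {δ : ℝ} (hδ : 0 ≤ δ)
    (hac : ∀ i, ∫ x, a i x ∂μ i ≤ c i) (hbc : ∀ i, ∫ x, b i x ∂μ i ≤ c i)
    (hba : ∀ j, ∫ x, (1 - b j x) * a j x ∂μ j ≤ δ)
    (hab : ∀ j, ∫ x, (1 - a j x) * b j x ∂μ j ≤ δ) :
    ∫ ω, |∏ i, a i (ω i) / c i - ∏ i, b i (ω i) / c i| ^ p ∂Measure.pi μ ≤
      (∏ i, c i)⁻¹ ^ p * (2 * δ * ∑ j, ∏ i ∈ Finset.univ.erase j, c i) := by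
  have hdiff : Integrable (fun ω => |∏ i, a i (ω i) - ∏ i, b i (ω i)|) (Measure.pi μ) :=
    .of_mem_Icc 0 1
      ((measurable_prod_comp_eval ha).sub (measurable_prod_comp_eval hb)).abs.aemeasurable
      (.of_forall fun _ => unitInterval.abs_sub_mem (unitInterval.prod_mem fun i _ => ha01 i _)
        (unitInterval.prod_mem fun i _ => hb01 i _))
  calc ∫ ω, |∏ i, a i (ω i) / c i - ∏ i, b i (ω i) / c i| ^ p ∂Measure.pi μ
      ≤ ∫ ω, (∏ i, c i)⁻¹ ^ p * |∏ i, a i (ω i) - ∏ i, b i (ω i)| ∂Measure.pi μ :=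
        integral_mono_of_nonneg (.of_forall fun _ => by positivity) (hdiff.const_mul _)
          (.of_forall fun ω => abs_prod_div_sub_prod_div_rpow_le (fun i => ha01 i (ω i))
            (fun i => hb01 i (ω i)) hc hp)
    _ = (∏ i, c i)⁻¹ ^ p * ∫ ω, |∏ i, a i (ω i) - ∏ i, b i (ω i)| ∂Measure.pi μ :=
        integral_const_mul _ _
    _ ≤ (∏ i, c i)⁻¹ ^ p * (2 * δ * ∑ j, ∏ i ∈ Finset.univ.erase j, c i) :=
        mul_le_mul_of_nonneg_left
          (integral_abs_prod_sub_prod_le_of_le ha hb ha01 hb01 hδ hac hbc hba hab)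
          (Real.rpow_nonneg (inv_nonneg.2 (Finset.prod_nonneg fun i _ => (hc i).le)) p)

end ProductMeasure

theorem stmt_11_general (k : ℕ) (ℓ : ℕ → ℝ) (hℓ1 : ∀ j, ℓ j < 1)
    (hℓmax : ∀ j, ℓ j ≤ ℓ 0) (p t h : ℝ) (hp1 : 1 < p) (hh : 0 < h) :
    ∫ ω : Fin k → ℝ,
      |(∏ j : Fin k,
          ((1 - (if Int.fract (t + h - ω j) ∈ Set.Ioo 0 (ℓ j.1) then (1:ℝ) else 0)) / (1 - ℓ j.1))) -
       (∏ j : Fin k,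
          ((1 - (if Int.fract (t - ω j) ∈ Set.Ioo 0 (ℓ j.1) then (1:ℝ) else 0)) / (1 - ℓ j.1)))| ^ p
      ∂ MeasureTheory.Measure.pi (fun _ => MeasureTheory.volume.restrict (Set.Ioo (0:ℝ) 1))
      ≤ (2 * h * k / (1 - ℓ 0)) * ∏ j : Fin k, (1 - ℓ j.1) ^ (1 - p) := by
  set a : Fin k → ℝ → ℝ := fun j u => 1 - arcIndicator (ℓ j) (t + h - u)
  set b : Fin k → ℝ → ℝ := fun j u => 1 - arcIndicator (ℓ j) (t - u)
  have hmeas : ∀ (s : ℝ) (j : Fin k), Measurable fun u => 1 - arcIndicator (ℓ j) (s - u) :=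
    fun _ _ => measurable_const.sub ((measurable _).comp (measurable_const.sub measurable_id))
  have hmem : ∀ (s : ℝ) (j : Fin k) (u : ℝ), 1 - arcIndicator (ℓ j) (s - u) ∈ Icc 0 1 :=
    fun _ _ _ => Icc.mem_iff_one_sub_mem.1 mem_Icc
  calc _ ≤ (∏ j : Fin k, (1 - ℓ j))⁻¹ ^ p *
        (2 * h * ∑ j : Fin k, ∏ i ∈ Finset.univ.erase j, (1 - ℓ i)) :=
        integral_abs_prod_div_sub_prod_div_rpow_le (a := a) (b := b) (hmeas _) (hmeas _)
          (hmem _) (hmem _) (fun j => sub_pos.2 (hℓ1 j)) hp1.le hh.le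
          (fun i => setIntegral_one_sub_arcIndicator_le (hℓ1 i).le _)
          (fun i => setIntegral_one_sub_arcIndicator_le (hℓ1 i).le _)
          (fun j => by simpa only [a, b, sub_sub_cancel] using
            setIntegral_arcIndicator_mul_one_sub_shift_le (hℓ1 j).le hh.le t)
          (fun j => by simpa only [a, b, sub_sub_cancel] using
            setIntegral_arcIndicator_shift_mul_one_sub_le hh.le t)
    _ ≤ 2 * h * (k / (1 - ℓ 0) * ∏ j : Fin k, (1 - ℓ j) ^ (1 - p)) := by
        rw [mul_left_comm]
        refine mul_le_mul_of_nonneg_left ?_ (by positivity)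
        simpa using inv_prod_rpow_mul_sum_prod_erase_le (c := fun j : Fin k => 1 - ℓ j)
          (sub_pos.2 (hℓ1 0)) (fun j => sub_le_sub_left (hℓmax j) 1) p
    _ = _ := by ring

theorem stmt_11 (k : ℕ) (hk : 0 < k) (ℓ : ℕ → ℝ) (hℓ0 : ∀ j, 0 < ℓ j) (hℓ1 : ∀ j, ℓ j < 1)
    (hℓmax : ∀ j, ℓ j ≤ ℓ 0) (p t h : ℝ) (hp1 : 1 < p) (hp2 : p ≤ 2) (hh : 0 < h) :
    ∫ ω : Fin k → ℝ,
      |(∏ j : Fin k,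
          ((1 - (if Int.fract (t + h - ω j) ∈ Set.Ioo 0 (ℓ j.1) then (1:ℝ) else 0)) / (1 - ℓ j.1))) -
       (∏ j : Fin k,
          ((1 - (if Int.fract (t - ω j) ∈ Set.Ioo 0 (ℓ j.1) then (1:ℝ) else 0)) / (1 - ℓ j.1)))| ^ p
      ∂ MeasureTheory.Measure.pi (fun _ => MeasureTheory.volume.restrict (Set.Ioo (0:ℝ) 1))
      ≤ (2 * h * k / (1 - ℓ 0)) * ∏ j : Fin k, (1 - ℓ j.1) ^ (1 - p) :=
  stmt_11_general k ℓ hℓ1 hℓmax p t h hp1 hh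
end
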